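/- arXiv:math/0703632 — 3 statements merged into one kernel-verified Lean document; each statement's English description precedes it below -/
import Mathlib

section
/- Let τ be a partition of [0,∞), n ≥ 1 and m ≥ 1. Then Δ_{n+1}^τ(τ_m) = ⋃_{k=0}^{m−1} (Δ_n^τ(τ_k) × [τ_k, τ_{k+1})), and the sets in this union are pairwise disjoint. -/
open MeasureTheory Filter Topology
open scoped ENNReal

/-- A partition of `[0, ∞)`: a strictly increasing sequence of nonnegative reals starting
at `0` and tending to infinity. -/
structure TimePartition where
  t : ℕ → ℝ
  strictMono : StrictMono t
  zero : t 0 = 0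
  tendsto_atTop : Filter.Tendsto t Filter.atTop Filter.atTop

/-- `σ` refines `τ` if every point of `τ` is a point of `σ`. -/
def TimePartition.Refines (σ τ : TimePartition) : Prop := ∀ n, ∃ m, σ.t m = τ.t n

/-- The simplex `Δ_n(t) = {x ∈ [0,t)ⁿ : x₁ < ⋯ < xₙ}`. -/
def simplex (n : ℕ) (t : ℝ) : Set (Fin n → ℝ) :=
  {x | StrictMono x ∧ ∀ i, x i ∈ Set.Ico (0 : ℝ) t}

/-- The box `[τ_p, τ_{p+1}) = {x ∈ ℝⁿ : τ_{pᵢ} ≤ xᵢ < τ_{pᵢ+1} for all i}`. -/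
def TimePartition.box (τ : TimePartition) {n : ℕ} (p : Fin n → ℕ) : Set (Fin n → ℝ) :=
  {x | ∀ i, x i ∈ Set.Ico (τ.t (p i)) (τ.t (p i + 1))}

/-- `Δ_n^τ` at level `m`: the union of the boxes `[τ_p, τ_{p+1})` over all strictly
increasing `n`-tuples `p` with entries in `{0, …, m−1}`. -/
def TimePartition.simplexDisc (τ : TimePartition) (n m : ℕ) : Set (Fin n → ℝ) :=
  ⋃ p ∈ {p : Fin n → ℕ | StrictMono p ∧ ∀ i, p i < m}, τ.box p

/-- `Δ_n^τ(s)`: equal to `TimePartition.simplexDisc τ n m` for the unique `m` with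
`s ∈ [τ_m, τ_{m+1})`, and empty if there is no such `m` (i.e. if `s < 0`). -/
def TimePartition.simplexDiscAt (τ : TimePartition) (n : ℕ) (s : ℝ) : Set (Fin n → ℝ) :=
  ⋃ m ∈ {m : ℕ | s ∈ Set.Ico (τ.t m) (τ.t (m + 1))}, τ.simplexDisc n m

/-! Splitting off the last index of a strictly increasing tuple `p` with entries below `m`
leaves a strictly increasing tuple with entries below `k := p_last < m`, so a box of
`Δ_{n+1}^τ(τ_m)` is a box of `Δ_n^τ(τ_k)` times `[τ_k, τ_{k+1})`. The pieces are disjoint because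
their last coordinates lie in the disjoint intervals `[τ_k, τ_{k+1})`. -/

lemma Fin.strictMono_snoc_iff {α : Type*} [Preorder α] {n : ℕ} {f : Fin n → α} {a : α} :
    StrictMono (Fin.snoc f a : Fin (n + 1) → α) ↔ StrictMono f ∧ ∀ i, f i < a := by
  refine ⟨fun h => ⟨fun i j hij => ?_, fun i => ?_⟩, fun ⟨hf, ha⟩ i j hij => ?_⟩
  · simpa using h (Fin.castSucc_lt_castSucc_iff.2 hij)
  · simpa using h (Fin.castSucc_lt_last i)
  · obtain ⟨i, rfl⟩ := Fin.exists_castSucc_eq.2 (Fin.ne_last_of_lt hij)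
    induction j using Fin.lastCases with
    | last => simpa using ha i
    | cast j => simpa using hf (Fin.castSucc_lt_castSucc_iff.1 hij)

namespace TimePartition

variable (τ : TimePartition)

lemma simplexDiscAt_t (n k : ℕ) : τ.simplexDiscAt n (τ.t k) = τ.simplexDisc n k := by
  have h : {m : ℕ | τ.t k ∈ Set.Ico (τ.t m) (τ.t (m + 1))} = {k} := by
    ext m
    simp only [Set.mem_ofPred_eq, Set.mem_Ico, Set.mem_singleton_iff,
      τ.strictMono.le_iff_le, τ.strictMono.lt_iff_lt]
    omega
  rw [simplexDiscAt, h, Set.biUnion_singleton]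

lemma mem_box_snoc_iff {n : ℕ} {q : Fin n → ℕ} {k : ℕ} {x : Fin (n + 1) → ℝ} :
    x ∈ τ.box (Fin.snoc q k : Fin (n + 1) → ℕ) ↔
      Fin.init x ∈ τ.box q ∧ x (Fin.last n) ∈ Set.Ico (τ.t k) (τ.t (k + 1)) := by
  simp only [box, Set.mem_ofPred_eq, Fin.forall_fin_succ', Fin.snoc_castSucc, Fin.snoc_last,
    Fin.init]

lemma mem_simplexDisc_succ_iff {n m : ℕ} {x : Fin (n + 1) → ℝ} :
    x ∈ τ.simplexDisc (n + 1) m ↔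
      ∃ k < m, Fin.init x ∈ τ.simplexDisc n k ∧ x (Fin.last n) ∈ Set.Ico (τ.t k) (τ.t (k + 1)) := by
  simp only [simplexDisc, Set.mem_iUnion, Set.mem_ofPred_eq, exists_prop]
  constructor
  · rintro ⟨p, ⟨hp, hpm⟩, hx⟩
    rw [← Fin.snoc_init_self p] at hp hpm hx
    rw [Fin.strictMono_snoc_iff] at hp
    rw [τ.mem_box_snoc_iff] at hx
    exact ⟨_, by simpa using hpm (Fin.last n), ⟨_, hp, hx.1⟩, hx.2⟩
  · rintro ⟨k, hk, ⟨q, ⟨hq, hqk⟩, hxq⟩, hlast⟩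
    refine ⟨Fin.snoc q k, ⟨Fin.strictMono_snoc_iff.2 ⟨hq, hqk⟩, fun i => ?_⟩,
      τ.mem_box_snoc_iff.2 ⟨hxq, hlast⟩⟩
    induction i using Fin.lastCases with
    | last => simpa using hk
    | cast i => simpa using (hqk i).trans hk

end TimePartition

theorem statement11_general (τ : TimePartition) (n m : ℕ) :
    (τ.simplexDiscAt (n + 1) (τ.t m) =
      ⋃ k ∈ Set.Iio m,
        {x : Fin (n + 1) → ℝ | Fin.init x ∈ τ.simplexDiscAt n (τ.t k) ∧
          x (Fin.last n) ∈ Set.Ico (τ.t k) (τ.t (k + 1))}) ∧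
    (Set.Iio m).PairwiseDisjoint
      (fun k => {x : Fin (n + 1) → ℝ | Fin.init x ∈ τ.simplexDiscAt n (τ.t k) ∧
        x (Fin.last n) ∈ Set.Ico (τ.t k) (τ.t (k + 1))}) := by
  refine ⟨?_, fun k _ l _ hkl => ?_⟩
  · ext x
    simp only [τ.simplexDiscAt_t, τ.mem_simplexDisc_succ_iff, Set.mem_iUnion, Set.mem_Iio,
      Set.mem_ofPred_eq, exists_prop]
  · have hIco := τ.strictMono.monotone.pairwise_disjoint_on_Ico_succ hkl
    exact (hIco.preimage fun x : Fin (n + 1) → ℝ => x (Fin.last n)).mono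
      (fun x hx => hx.2) (fun x hx => hx.2)

/-- `Δ_{n+1}^τ(τ_m) = ⋃_{k=0}^{m−1} (Δ_n^τ(τ_k) × [τ_k, τ_{k+1}))`, and
the sets in this union are pairwise disjoint. -/
theorem statement11 (τ : TimePartition) (n m : ℕ) (hn : 1 ≤ n) (hm : 1 ≤ m) :
    (τ.simplexDiscAt (n + 1) (τ.t m) =
      ⋃ k ∈ Set.Iio m,
        {x : Fin (n + 1) → ℝ | Fin.init x ∈ τ.simplexDiscAt n (τ.t k) ∧
          x (Fin.last n) ∈ Set.Ico (τ.t k) (τ.t (k + 1))}) ∧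
    (Set.Iio m).PairwiseDisjoint
      (fun k => {x : Fin (n + 1) → ℝ | Fin.init x ∈ τ.simplexDiscAt n (τ.t k) ∧
        x (Fin.last n) ∈ Set.Ico (τ.t k) (τ.t (k + 1))}) :=
  statement11_general τ n m
end

section
/- Let τ be a partition of [0,∞), n ≥ 1, m ≥ 0 and t ∈ [τ_m, τ_{m+1}). Then the set {(t_1, …, t_n, s) : s ∈ [0, τ_m), (t_1, …, t_n) ∈ Δ_n(s) ∖ Δ_n^τ(s)} ∪ {(t_1, …, t_n, s) : s ∈ [τ_m, t), (t_1, …, t_n) ∈ Δ_n(s)} is contained in Δ_{n+1}(t) ∖ Δ_{n+1}^τ(t). -/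
open MeasureTheory Filter Topology
open scoped ENNReal

/-!
A point of the first set avoids `Δ_{n+1}^τ(t)`: if it lay in a box `[τ_p, τ_{p+1})` with
`p` increasing, its last coordinate `s` would lie in `[τ_{p_{n+1}}, τ_{p_{n+1}+1})`, and dropping
the last index would put `(t₁, …, tₙ)` into `Δ_n^τ(s)`. A point of the second set avoids it
because every coordinate of a point of `Δ_{n+1}^τ(t)` is below `τ_m`, while `s ≥ τ_m`.
-/

namespace TimePartition

variable (τ : TimePartition)

lemma t_nonneg (m : ℕ) : 0 ≤ τ.t m :=
  τ.zero ▸ τ.strictMono.monotone (Nat.zero_le m)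

lemma eq_of_mem_Ico {m m' : ℕ} {s : ℝ} (h : s ∈ Set.Ico (τ.t m) (τ.t (m + 1)))
    (h' : s ∈ Set.Ico (τ.t m') (τ.t (m' + 1))) : m = m' := by
  by_contra! hne
  rcases hne.lt_or_gt with hlt | hlt
  · exact (h.2.trans_le (τ.strictMono.monotone hlt)).not_ge h'.1
  · exact (h'.2.trans_le (τ.strictMono.monotone hlt)).not_ge h.1

lemma simplexDiscAt_eq_of_mem_Ico {n m : ℕ} {s : ℝ} (hs : s ∈ Set.Ico (τ.t m) (τ.t (m + 1))) :
    τ.simplexDiscAt n s = τ.simplexDisc n m := by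
  ext x
  simp only [simplexDiscAt, Set.mem_iUnion, exists_prop]
  constructor
  · rintro ⟨m', hm', hx⟩
    rwa [τ.eq_of_mem_Ico hs hm']
  · exact fun hx => ⟨m, hs, hx⟩

lemma lt_of_mem_simplexDisc {n m : ℕ} {x : Fin n → ℝ} (hx : x ∈ τ.simplexDisc n m)
    (i : Fin n) : x i < τ.t m := by
  simp only [simplexDisc, Set.mem_iUnion, exists_prop] at hx
  obtain ⟨p, ⟨-, hpm⟩, hbox⟩ := hx
  exact (hbox i).2.trans_le (τ.strictMono.monotone (hpm i))

lemma init_mem_simplexDiscAt {n m : ℕ} {x : Fin (n + 1) → ℝ}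
    (hx : x ∈ τ.simplexDisc (n + 1) m) : Fin.init x ∈ τ.simplexDiscAt n (x (Fin.last n)) := by
  simp only [simplexDisc, Set.mem_iUnion, exists_prop] at hx
  obtain ⟨p, ⟨hp, -⟩, hbox⟩ := hx
  simp only [simplexDiscAt, simplexDisc, Set.mem_iUnion, exists_prop]
  exact ⟨p (Fin.last n), hbox (Fin.last n), Fin.init p,
    ⟨fun i j hij => hp (Fin.castSucc_lt_castSucc_iff.2 hij), fun i => hp (Fin.castSucc_lt_last i)⟩,
    fun i => hbox i.castSucc⟩

end TimePartition

lemma mem_simplex_of_init_mem {n : ℕ} {x : Fin (n + 1) → ℝ} {t : ℝ}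
    (hlast : x (Fin.last n) ∈ Set.Ico 0 t) (hx : Fin.init x ∈ simplex n (x (Fin.last n))) :
    x ∈ simplex (n + 1) t := by
  obtain ⟨hmono, hmem⟩ := hx
  refine ⟨fun i j hij => ?_, fun i => ?_⟩
  · induction j using Fin.lastCases with
    | last =>
      obtain ⟨i, rfl⟩ := Fin.exists_castSucc_eq.2 hij.ne
      exact (hmem i).2
    | cast j =>
      obtain ⟨i, rfl⟩ := Fin.exists_castSucc_eq.2 (hij.trans (Fin.castSucc_lt_last j)).ne
      exact hmono (Fin.castSucc_lt_castSucc_iff.1 hij)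
  · induction i using Fin.lastCases with
    | last => exact hlast
    | cast i => exact ⟨(hmem i).1, (hmem i).2.trans hlast.2⟩

theorem statement12_general (τ : TimePartition) (n : ℕ) (m : ℕ) (t : ℝ)
    (ht : t ∈ Set.Ico (τ.t m) (τ.t (m + 1))) :
    {x : Fin (n + 1) → ℝ |
        x (Fin.last n) ∈ Set.Ico (0 : ℝ) (τ.t m) ∧
        Fin.init x ∈ simplex n (x (Fin.last n)) \ τ.simplexDiscAt n (x (Fin.last n))} ∪
      {x : Fin (n + 1) → ℝ |
        x (Fin.last n) ∈ Set.Ico (τ.t m) t ∧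
        Fin.init x ∈ simplex n (x (Fin.last n))} ⊆
      simplex (n + 1) t \ τ.simplexDiscAt (n + 1) t := by
  rw [τ.simplexDiscAt_eq_of_mem_Ico ht]
  rintro x (⟨hs, hx, hxd⟩ | ⟨hs, hx⟩)
  · exact ⟨mem_simplex_of_init_mem ⟨hs.1, hs.2.trans_le ht.1⟩ hx,
      fun h => hxd (τ.init_mem_simplexDiscAt h)⟩
  · exact ⟨mem_simplex_of_init_mem ⟨(τ.t_nonneg m).trans hs.1, hs.2⟩ hx,
      fun h => (τ.lt_of_mem_simplexDisc h (Fin.last n)).not_ge hs.1⟩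

/-- if `t ∈ [τ_m, τ_{m+1})` then
`{(t₁,…,tₙ,s) : s ∈ [0, τ_m), (t₁,…,tₙ) ∈ Δ_n(s) ∖ Δ_n^τ(s)} ∪
 {(t₁,…,tₙ,s) : s ∈ [τ_m, t), (t₁,…,tₙ) ∈ Δ_n(s)} ⊆ Δ_{n+1}(t) ∖ Δ_{n+1}^τ(t)`. -/
theorem statement12 (τ : TimePartition) (n : ℕ) (hn : 1 ≤ n) (m : ℕ) (t : ℝ)
    (ht : t ∈ Set.Ico (τ.t m) (τ.t (m + 1))) :
    {x : Fin (n + 1) → ℝ |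
        x (Fin.last n) ∈ Set.Ico (0 : ℝ) (τ.t m) ∧
        Fin.init x ∈ simplex n (x (Fin.last n)) \ τ.simplexDiscAt n (x (Fin.last n))} ∪
      {x : Fin (n + 1) → ℝ |
        x (Fin.last n) ∈ Set.Ico (τ.t m) t ∧
        Fin.init x ∈ simplex n (x (Fin.last n))} ⊆
      simplex (n + 1) t \ τ.simplexDiscAt (n + 1) t :=
  statement12_general τ n m t ht
end

section
/- For every n ≥ 1, t > 0 and ε > 0 there exists a partition τ₀ of [0,∞) such that for every partition τ refining τ₀, the n-dimensional Lebesgue measure of Δ_n(t) ∖ Δ_n^τ(t) is less than ε; that is, the Lebesgue measure of Δ_n(t) ∖ Δ_n^τ(t) tends to 0 along the net of partitions directed by refinement. -/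
open MeasureTheory Filter Topology
open scoped ENNReal

/-- A partition of `[0, ∞)`: a strictly increasing sequence of nonnegative reals starting
at `0` and tending to infinity. -/
structure HalfLinePartition where
  t : ℕ → ℝ
  strictMono : StrictMono t
  zero : t 0 = 0
  tendsto_atTop : Filter.Tendsto t Filter.atTop Filter.atTop

/-- `σ` refines `τ` if every point of `τ` is a point of `σ`. -/
def HalfLinePartition.Refines (σ τ : HalfLinePartition) : Prop := ∀ n, ∃ m, σ.t m = τ.t n

/-- The box `[τ_p, τ_{p+1}) = {x ∈ ℝⁿ : τ_{pᵢ} ≤ xᵢ < τ_{pᵢ+1} for all i}`. -/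
def HalfLinePartition.box (τ : HalfLinePartition) {n : ℕ} (p : Fin n → ℕ) : Set (Fin n → ℝ) :=
  {x | ∀ i, x i ∈ Set.Ico (τ.t (p i)) (τ.t (p i + 1))}

/-- `Δ_n^τ` at level `m`: the union of the boxes `[τ_p, τ_{p+1})` over all strictly
increasing `n`-tuples `p` with entries in `{0, …, m−1}`. -/
def HalfLinePartition.simplexDisc (τ : HalfLinePartition) (n m : ℕ) : Set (Fin n → ℝ) :=
  ⋃ p ∈ {p : Fin n → ℕ | StrictMono p ∧ ∀ i, p i < m}, τ.box p

/-- `Δ_n^τ(s)`: equal to `HalfLinePartition.simplexDisc τ n m` for the unique `m` with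
`s ∈ [τ_m, τ_{m+1})`, and empty if there is no such `m` (i.e. if `s < 0`). -/
def HalfLinePartition.simplexDiscAt (τ : HalfLinePartition) (n : ℕ) (s : ℝ) : Set (Fin n → ℝ) :=
  ⋃ m ∈ {m : ℕ | s ∈ Set.Ico (τ.t m) (τ.t (m + 1))}, τ.simplexDisc n m

/-!
Take for `τ₀` the uniform partition of mesh `δ = t / N`. If `τ` refines `τ₀`, then `t` is a
point `τ_m` of `τ` and every cell of `τ` lies in a cell of `τ₀`. For `x ∈ Δ_n(t)` the indices
`p_i` of the `τ`-cells containing `x_i` are nondecreasing and below `m`; so if `x ∉ Δ_n^τ(t)`,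
`p` is not injective and two coordinates `x_a`, `x_b` (`a ≠ b`) lie in one `τ`-cell, hence in
one cell `[qδ, (q+1)δ)` of `τ₀`. The `n² N` strips so obtained have measure `δ² t^(n-2)` each,
for a total of `n² t² t^(n-2) / N`, which is small for large `N`.
-/

namespace HalfLinePartition

lemma nonneg (τ : HalfLinePartition) (k : ℕ) : 0 ≤ τ.t k :=
  τ.zero ▸ τ.strictMono.monotone k.zero_le

lemma exists_mem_Ico (τ : HalfLinePartition) {s : ℝ} (hs : 0 ≤ s) :
    ∃ k, s ∈ Set.Ico (τ.t k) (τ.t (k + 1)) := by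
  have hex : ∃ k, s < τ.t (k + 1) :=
    ((τ.tendsto_atTop.comp (tendsto_add_atTop_nat 1)).eventually_gt_atTop s).exists
  refine ⟨Nat.find hex, ?_, Nat.find_spec hex⟩
  rcases h : Nat.find hex with _ | j
  · exact τ.zero ▸ hs
  · exact not_lt.1 (Nat.find_min hex (h ▸ j.lt_succ_self))

lemma le_of_mem_Ico_of_mem_Ico (τ : HalfLinePartition) {x y : ℝ} {k l : ℕ}
    (hx : x ∈ Set.Ico (τ.t k) (τ.t (k + 1))) (hy : y ∈ Set.Ico (τ.t l) (τ.t (l + 1)))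
    (hxy : x ≤ y) : k ≤ l := by
  by_contra! h
  linarith [τ.strictMono.monotone (h : l + 1 ≤ k), hx.1, hy.2]

lemma Refines.exists_Ico_subset {σ τ : HalfLinePartition} (h : σ.Refines τ) (k : ℕ) :
    ∃ q, Set.Ico (σ.t k) (σ.t (k + 1)) ⊆ Set.Ico (τ.t q) (τ.t (q + 1)) := by
  obtain ⟨q, hq⟩ := τ.exists_mem_Ico (σ.nonneg k)
  obtain ⟨m, hm⟩ := h (q + 1)
  have hkm : k + 1 ≤ m := σ.strictMono.lt_iff_lt.1 (hm ▸ hq.2)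
  exact ⟨q, Set.Ico_subset_Ico hq.1 (hm ▸ σ.strictMono.monotone hkm)⟩

def uniform (δ : ℝ) (hδ : 0 < δ) : HalfLinePartition where
  t k := k * δ
  strictMono _ _ h := mul_lt_mul_of_pos_right (Nat.cast_lt.2 h) hδ
  zero := by simp
  tendsto_atTop := tendsto_natCast_atTop_atTop.atTop_mul_const hδ

lemma simplexDisc_subset_simplexDiscAt (τ : HalfLinePartition) (n : ℕ) {m : ℕ} {s : ℝ}
    (hs : s ∈ Set.Ico (τ.t m) (τ.t (m + 1))) : τ.simplexDisc n m ⊆ τ.simplexDiscAt n s :=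
  Set.subset_biUnion_of_mem (u := fun m => τ.simplexDisc n m) hs

lemma exists_ne_mem_Ico_of_notMem_simplexDisc (τ : HalfLinePartition) {n m : ℕ}
    {x : Fin n → ℝ} (hx : x ∈ simplex n (τ.t m)) (hx' : x ∉ τ.simplexDisc n m) :
    ∃ a b, a ≠ b ∧ ∃ k, x a ∈ Set.Ico (τ.t k) (τ.t (k + 1)) ∧
      x b ∈ Set.Ico (τ.t k) (τ.t (k + 1)) := by
  choose p hp using fun i => τ.exists_mem_Ico (hx.2 i).1
  have hp_mono : Monotone p := fun i j hij =>
    τ.le_of_mem_Ico_of_mem_Ico (hp i) (hp j) (hx.1.monotone hij)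
  have hp_lt : ∀ i, p i < m := fun i => τ.strictMono.lt_iff_lt.1 ((hp i).1.trans_lt (hx.2 i).2)
  have hp_not_inj : ¬ Function.Injective p := fun hinj =>
    hx' (Set.mem_biUnion ⟨hp_mono.strictMono_of_injective hinj, hp_lt⟩ hp)
  obtain ⟨a, b, hpab, hab⟩ := Function.not_injective_iff.1 hp_not_inj
  exact ⟨a, b, hab, p a, hp a, hpab ▸ hp b⟩

def pairStrip {ι : Type*} [DecidableEq ι] (a b : ι) (I J : Set ℝ) : Set (ι → ℝ) :=
  Set.univ.pi fun k => if k = a ∨ k = b then I else J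

lemma volume_pairStrip {ι : Type*} [Fintype ι] [DecidableEq ι] {a b : ι} (hab : a ≠ b)
    (I J : Set ℝ) :
    volume (pairStrip a b I J) = volume I ^ 2 * volume J ^ (Fintype.card ι - 2) := by
  have hpair : Finset.univ.filter (fun k => k = a ∨ k = b) = {a, b} := by ext; simp
  rw [pairStrip, volume_pi_pi]
  simp only [apply_ite volume]
  rw [Finset.prod_ite, Finset.prod_const, Finset.prod_const, Finset.filter_not, hpair,
    Finset.card_sdiff]
  simp [Finset.card_pair hab]

lemma Refines.simplex_diff_simplexDiscAt_subset {τ τ₀ : HalfLinePartition}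
    (hτ : τ.Refines τ₀) {n N : ℕ} {t : ℝ} (hN : τ₀.t N = t) :
    simplex n t \ τ.simplexDiscAt n t ⊆ ⋃ z : Fin n × Fin n × Fin N, ⋃ (_ : z.1 ≠ z.2.1),
      pairStrip z.1 z.2.1 (Set.Ico (τ₀.t z.2.2) (τ₀.t (z.2.2 + 1))) (Set.Ico 0 t) := by
  rintro x ⟨hx, hx'⟩
  obtain ⟨m, hm⟩ := hτ N
  have htm : t ∈ Set.Ico (τ.t m) (τ.t (m + 1)) :=
    ⟨(hm.trans hN).le, hm.trans hN ▸ τ.strictMono m.lt_succ_self⟩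
  obtain ⟨a, b, hab, k, hak, hbk⟩ := τ.exists_ne_mem_Ico_of_notMem_simplexDisc
    (hm.trans hN ▸ hx) (fun h => hx' (τ.simplexDisc_subset_simplexDiscAt n htm h))
  obtain ⟨q, hkq⟩ := hτ.exists_Ico_subset k
  have hqN : q < N :=
    τ₀.strictMono.lt_iff_lt.1 <| ((hkq hak).1.trans_lt (hx.2 a).2).trans_eq hN.symm
  refine Set.mem_iUnion₂.2 ⟨(a, b, ⟨q, hqN⟩), hab, fun i _ => ?_⟩
  dsimp only
  split_ifs with hi
  · rcases hi with rfl | rfl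
    exacts [hkq hak, hkq hbk]
  · exact hx.2 i

lemma Refines.volume_simplex_diff_simplexDiscAt_le {τ τ₀ : HalfLinePartition}
    (hτ : τ.Refines τ₀) (n : ℕ) {N : ℕ} {t δ : ℝ} (hN : τ₀.t N = t)
    (hmesh : ∀ q, τ₀.t (q + 1) - τ₀.t q ≤ δ) :
    volume (simplex n t \ τ.simplexDiscAt n t) ≤
      (n * n * N : ℕ) * (ENNReal.ofReal δ ^ 2 * ENNReal.ofReal t ^ (n - 2)) := by
  calc volume (simplex n t \ τ.simplexDiscAt n t)
      ≤ ∑ z : Fin n × Fin n × Fin N, volume (⋃ (_ : z.1 ≠ z.2.1),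
          pairStrip z.1 z.2.1 (Set.Ico (τ₀.t z.2.2) (τ₀.t (z.2.2 + 1))) (Set.Ico 0 t)) :=
        (measure_mono (hτ.simplex_diff_simplexDiscAt_subset hN)).trans
          (measure_iUnion_fintype_le _ _)
    _ ≤ ∑ _z : Fin n × Fin n × Fin N, ENNReal.ofReal δ ^ 2 * ENNReal.ofReal t ^ (n - 2) := by
        refine Finset.sum_le_sum fun z _ => ?_
        rcases eq_or_ne z.1 z.2.1 with h | h
        · simp [h]
        · simp only [ne_eq, h, not_false_eq_true, Set.iUnion_true]
          rw [volume_pairStrip h, Real.volume_Ico, Real.volume_Ico, Fintype.card_fin, sub_zero]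
          gcongr
          exact hmesh _
    _ = (n * n * N : ℕ) * (ENNReal.ofReal δ ^ 2 * ENNReal.ofReal t ^ (n - 2)) := by
        simp [mul_assoc]

end HalfLinePartition

theorem statement13_general (n : ℕ) (t : ℝ) (ht : 0 < t) (ε : ℝ) (hε : 0 < ε) :
    ∃ τ₀ : HalfLinePartition, ∀ τ : HalfLinePartition, τ.Refines τ₀ →
      volume (simplex n t \ τ.simplexDiscAt n t) < ENNReal.ofReal ε := by
  obtain ⟨N, hN⟩ := exists_nat_gt (n * n * t ^ 2 * t ^ (n - 2) / ε)
  have hN0 : (0 : ℝ) < N := (div_nonneg (by positivity) hε.le).trans_lt hN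
  have hδ : 0 < t / N := div_pos ht hN0
  refine ⟨.uniform (t / N) hδ, fun τ hτ => ?_⟩
  have hvol := hτ.volume_simplex_diff_simplexDiscAt_le n (δ := t / N) (mul_div_cancel₀ t hN0.ne')
    fun q => by simp [HalfLinePartition.uniform, add_mul]
  refine hvol.trans_lt ?_
  rw [← ENNReal.ofReal_pow hδ.le, ← ENNReal.ofReal_pow ht.le, ← ENNReal.ofReal_natCast,
    ← ENNReal.ofReal_mul (by positivity), ← ENNReal.ofReal_mul (by positivity),
    ENNReal.ofReal_lt_ofReal_iff hε]
  calc _ = n * n * t ^ 2 * t ^ (n - 2) / N := by push_cast; field_simp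
    _ < ε := (div_lt_iff₀ hN0).2 (by rwa [div_lt_iff₀' hε] at hN)

/-- for every `n ≥ 1`, `t > 0` and `ε > 0` there is a partition `τ₀` such
that for every refinement `τ` of `τ₀` the Lebesgue measure of `Δ_n(t) ∖ Δ_n^τ(t)` is
less than `ε`: the measure of `Δ_n(t) ∖ Δ_n^τ(t)` tends to `0` along the net of
partitions directed by refinement. -/
theorem statement13 (n : ℕ) (hn : 1 ≤ n) (t : ℝ) (ht : 0 < t) (ε : ℝ) (hε : 0 < ε) :
    ∃ τ₀ : HalfLinePartition, ∀ τ : HalfLinePartition, τ.Refines τ₀ →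
      volume (simplex n t \ τ.simplexDiscAt n t) < ENNReal.ofReal ε :=
  statement13_general n t ht ε hε
end
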